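/- arXiv:1506.08592 — 3 statements merged into one kernel-verified Lean document; each statement's English description precedes it below -/
import Mathlib

section
/- For every finite simple graph G and every deterministic online independent set algorithm ALG, there exists an ordering φ of V(G) that is conservative with respect to the run of ALG — meaning that whenever the vertex revealed at some step has a neighbor among the vertices already accepted by ALG (a pointless request), every vertex not yet revealed at that step also has a neighbor among the vertices already accepted by ALG — and on which ALG accepts an independent set of size at most I^O(G). -/
namespace OnlinePaper

/-- A deterministic online algorithm in the vertex-arrival model: given the number `n` of
previously revealed vertices and the Boolean adjacency matrix on the `n + 1` revealed
vertices (the newly revealed vertex has index `Fin.last n`), decide whether to accept the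
newly revealed vertex.  The algorithm sees only this order-canonical information. -/
def OnlineAlg : Type := (n : ℕ) → (Fin (n + 1) → Fin (n + 1) → Bool) → Bool

/-- The complement algorithm `ĀLG`: it simulates `A` and accepts exactly the requests
that `A` rejects. -/
def coAlg (A : OnlineAlg) : OnlineAlg := fun n M => !(A n M)

variable {V : Type}

/-- The Boolean adjacency matrix on the first `i + 1` revealed vertices, when the graph `G`
is presented in the order `φ`. -/
noncomputable def revealedMatrix [Fintype V] (G : SimpleGraph V)
    (φ : Fin (Fintype.card V) ≃ V) (i : Fin (Fintype.card V)) :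
    Fin (i.val + 1) → Fin (i.val + 1) → Bool :=
  fun a b =>
    @decide (G.Adj (φ ⟨a.val, by have := a.isLt; have := i.isLt; omega⟩)
        (φ ⟨b.val, by have := b.isLt; have := i.isLt; omega⟩)) (Classical.propDecidable _)

/-- Whether the algorithm `A` accepts the vertex revealed at step `i` when the graph `G` is
presented in the order `φ`. -/
noncomputable def accepts [Fintype V] (A : OnlineAlg) (G : SimpleGraph V)
    (φ : Fin (Fintype.card V) ≃ V) (i : Fin (Fintype.card V)) : Bool :=
  A i.val (revealedMatrix G φ i)

/-- The set of vertices accepted by `A` when `G` is presented in the order `φ`. -/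
noncomputable def acceptedSet [Fintype V] (A : OnlineAlg) (G : SimpleGraph V)
    (φ : Fin (Fintype.card V) ≃ V) : Finset V :=
  Finset.univ.filter (fun v => accepts A G φ (φ.symm v) = true)

/-- `s` is an independent set of `G`. -/
def IsIndep (G : SimpleGraph V) (s : Finset V) : Prop := ∀ a ∈ s, ∀ b ∈ s, ¬ G.Adj a b

/-- `s` is a vertex cover of `G`. -/
def IsVC (G : SimpleGraph V) (s : Finset V) : Prop := ∀ a b : V, G.Adj a b → a ∈ s ∨ b ∈ s

/-- `s` is a dominating set of `G`. -/
def IsDom (G : SimpleGraph V) (s : Finset V) : Prop := ∀ v : V, v ∈ s ∨ ∃ u ∈ s, G.Adj u v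

/-- `s` is an inclusion-maximal independent set of `G`. -/
def IsMaxIndep [DecidableEq V] (G : SimpleGraph V) (s : Finset V) : Prop :=
  IsIndep G s ∧ ∀ v ∉ s, ¬ IsIndep G (insert v s)

/-- For maximization problems: the worst-case (minimum over orderings) number of requests
accepted by `A` on `G`. -/
noncomputable def minScore [Fintype V] (A : OnlineAlg) (G : SimpleGraph V) : ℕ :=
  sInf {m | ∃ φ : Fin (Fintype.card V) ≃ V, (acceptedSet A G φ).card = m}

/-- For minimization problems: the worst-case (maximum over orderings) number of requests
accepted by `A` on `G`. -/
noncomputable def maxScore [Fintype V] (A : OnlineAlg) (G : SimpleGraph V) : ℕ :=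
  sSup {m | ∃ φ : Fin (Fintype.card V) ≃ V, (acceptedSet A G φ).card = m}

/-- The online independence number `I^O(G)`: the largest `m` such that some online
algorithm accepts, on every ordering, an independent set of size at least `m`. -/
noncomputable def onlineIndepNum [Fintype V] (G : SimpleGraph V) : ℕ :=
  sSup {m | ∃ A : OnlineAlg, ∀ φ : Fin (Fintype.card V) ≃ V,
      IsIndep G (acceptedSet A G φ) ∧ m ≤ (acceptedSet A G φ).card}

/-- The online vertex cover number `V^O(G)`: the smallest `m` such that some online
algorithm accepts, on every ordering, a vertex cover of size at most `m`. -/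
noncomputable def onlineVCNum [Fintype V] (G : SimpleGraph V) : ℕ :=
  sInf {m | ∃ A : OnlineAlg, ∀ φ : Fin (Fintype.card V) ≃ V,
      IsVC G (acceptedSet A G φ) ∧ (acceptedSet A G φ).card ≤ m}

/-- The online domination number `D^O(G)`: the smallest `m` such that some online
algorithm accepts, on every ordering, a dominating set of size at most `m`. -/
noncomputable def onlineDomNum [Fintype V] (G : SimpleGraph V) : ℕ :=
  sInf {m | ∃ A : OnlineAlg, ∀ φ : Fin (Fintype.card V) ≃ V,
      IsDom G (acceptedSet A G φ) ∧ (acceptedSet A G φ).card ≤ m}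

/-- The greedy independent set decision: accept the newly revealed vertex iff none of its
previously revealed neighbors has been accepted (by the same greedy rule). -/
def gisAux : (n : ℕ) → (Fin (n + 1) → Fin (n + 1) → Bool) → Bool
  | n, M =>
    decide (∀ j : Fin n,
      gisAux j.val (fun a b => M (Fin.castLE (Nat.succ_le_succ j.isLt.le) a)
        (Fin.castLE (Nat.succ_le_succ j.isLt.le) b)) = true →
      M j.castSucc (Fin.last n) = false)
termination_by n => n
decreasing_by all_goals exact Fin.isLt _

/-- `GIS`, the greedy algorithm for Online Independent Set. -/
def gisAlg : OnlineAlg := fun n M => gisAux n M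

/-- `GDS`, the greedy algorithm for Online Dominating Set (the same algorithm as `GIS`). -/
def gdsAlg : OnlineAlg := gisAlg

/-- The greedy vertex cover decision: accept the newly revealed vertex iff it has a
previously revealed neighbor that was rejected (by the same greedy rule). -/
def gvcAux : (n : ℕ) → (Fin (n + 1) → Fin (n + 1) → Bool) → Bool
  | n, M =>
    decide (∃ j : Fin n,
      gvcAux j.val (fun a b => M (Fin.castLE (Nat.succ_le_succ j.isLt.le) a)
        (Fin.castLE (Nat.succ_le_succ j.isLt.le) b)) = false ∧
      M j.castSucc (Fin.last n) = true)
termination_by n => n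
decreasing_by all_goals exact Fin.isLt _

/-- `GVC`, the greedy algorithm for Online Vertex Cover. -/
def gvcAlg : OnlineAlg := fun n M => gvcAux n M

/-- `IS-STAR`: rejects the first vertex; rejects the second vertex if it is adjacent to the
first; rejects any later vertex having more than one previously revealed neighbor; accepts
every other vertex. -/
def isStarAlg : OnlineAlg := fun n M =>
  let c := (Finset.univ.filter (fun j : Fin n => M j.castSucc (Fin.last n) = true)).card
  if n = 0 then false
  else if n = 1 then decide (c = 0)
  else decide (c ≤ 1)

/-- `Almost-GIS`: identical to `GIS` except that it additionally rejects any revealed vertex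
having at least two previously revealed neighbors. -/
def almostGisAux : (n : ℕ) → (Fin (n + 1) → Fin (n + 1) → Bool) → Bool
  | n, M =>
    (decide (∀ j : Fin n,
      almostGisAux j.val (fun a b => M (Fin.castLE (Nat.succ_le_succ j.isLt.le) a)
        (Fin.castLE (Nat.succ_le_succ j.isLt.le) b)) = true →
      M j.castSucc (Fin.last n) = false)) &&
    decide ((Finset.univ.filter (fun j : Fin n => M j.castSucc (Fin.last n) = true)).card ≤ 1)
termination_by n => n
decreasing_by all_goals exact Fin.isLt _

/-- `Almost-GIS` as an online algorithm. -/
def almostGisAlg : OnlineAlg := fun n M => almostGisAux n M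

/-- The star graph `S_n`: a center `0` adjacent to `n` further vertices, and no other edges. -/
def starGraph (n : ℕ) : SimpleGraph (Fin (n + 1)) where
  Adj a b := a ≠ b ∧ (a = 0 ∨ b = 0)
  symm := ⟨fun _ _ h => ⟨h.1.symm, h.2.symm⟩⟩
  loopless := ⟨fun _ h => h.1 rfl⟩

/-- `v` is an isolated vertex of `G`. -/
def IsIsolated (G : SimpleGraph V) (v : V) : Prop := ∀ u : V, ¬ G.Adj v u

/-- `k(G)`: the number of isolated vertices of `G`. -/
noncomputable def numIsolated [Fintype V] (G : SimpleGraph V) : ℕ :=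
  Finset.card (@Finset.filter V (fun v => IsIsolated G v) (Classical.decPred _) Finset.univ)

/-- `G'`: the subgraph of `G` induced by the non-isolated vertices. -/
def inducedNonIsolated (G : SimpleGraph V) : SimpleGraph {v : V // ¬ IsIsolated G v} :=
  SimpleGraph.comap Subtype.val G

noncomputable instance {α : Type} [Fintype α] {p : α → Prop} : Fintype {v : α // p v} :=
  Fintype.ofFinite _

/-- The independent domination number: the minimum size of an inclusion-maximal independent
set of `G`. -/
noncomputable def indepDomNum [DecidableEq V] (G : SimpleGraph V) : ℕ :=
  sInf {m | ∃ s : Finset V, IsMaxIndep G s ∧ s.card = m}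

/-- The independence number `α(G)`: the maximum size of an independent set of `G`. -/
noncomputable def indepNum (G : SimpleGraph V) : ℕ :=
  sSup {m | ∃ s : Finset V, IsIndep G s ∧ s.card = m}

/-- `G` is a Freckle Graph: `k(G) + s(G') ≥ I^O(G')`. -/
noncomputable def IsFreckle [Fintype V] [DecidableEq V] (G : SimpleGraph V) : Prop :=
  onlineIndepNum (inducedNonIsolated G) ≤ numIsolated G + indepDomNum (inducedNonIsolated G)


/-!
Let `B` be the algorithm that rejects every pointless request and passes the remaining ones to
`A`, hiding the pointless requests from `A`. `B` always accepts an independent set, so on a worst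
ordering `ψ` for `B` it accepts at most `I^O(G)` vertices. Reorder `ψ` so that the requests that
were not pointless for `B` come first, in their original order. On the new ordering `A` sees, during
this first phase, exactly what it saw inside `B`, so it makes the same decisions and no request of
the first phase is pointless; every later request has a neighbour that `A` accepted in the first
phase. This is conservativity, and when `A` accepts an independent set it accepts nothing after the
first phase, i.e. exactly the set `B` accepts on `ψ`.
-/

namespace OnlineAlg

variable {W : Type}

/-- The answer of `A` to the request `v` after the requests `l`; `l.getD a v` reads the position
`l.length` as `v`. -/
def decision (A : OnlineAlg) (adj : W → W → Bool) (l : List W) (v : W) : Bool :=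
  A l.length fun a b => adj (l.getD a v) (l.getD b v)

theorem decision_map {X : Type} (A : OnlineAlg) (adj : W → W → Bool) (f : X → W) (l : List X)
    (v : X) : A.decision adj (l.map f) (f v) = A.decision (fun x y => adj (f x) (f y)) l v := by
  simp only [decision, List.getD_map]
  rw [List.length_map]

theorem apply_congr (A : OnlineAlg) {m n : ℕ} (h : m = n)
    {M : Fin (m + 1) → Fin (m + 1) → Bool}
    {M' : Fin (n + 1) → Fin (n + 1) → Bool}
    (hM : ∀ a b, M a b = M' (a.cast (by rw [h])) (b.cast (by rw [h]))) : A m M = A n M' := by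
  subst h
  congr
  funext a b
  exact hM a b

end OnlineAlg

/-- `σ` enumerates the elements satisfying `p` first, in increasing order. -/
def IsStablePartition {n : ℕ} (p : Fin n → Prop) (σ : Equiv.Perm (Fin n)) : Prop :=
  ∀ i j, j < i → p (σ i) → p (σ j) ∧ σ j < σ i

theorem exists_isStablePartition {n : ℕ} (p : Fin n → Prop) :
    ∃ σ, IsStablePartition p σ := by
  classical
  let f : Fin n → ℕ := fun k => if p k then k else n + k
  have hf : Function.Injective f := by
    intro a b hab
    simp only [f] at hab
    split_ifs at hab <;> omega
  have hmono : StrictMono (f ∘ Tuple.sort f) :=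
    (Tuple.monotone_sort f).strictMono_of_injective (hf.comp (Tuple.sort f).injective)
  refine ⟨Tuple.sort f, fun i j hji hi => ?_⟩
  have hlt := hmono hji
  simp only [Function.comp_apply, f, if_pos hi] at hlt
  have hj : p (Tuple.sort f j) := by
    by_contra hj
    rw [if_neg hj] at hlt
    omega
  rw [if_pos hj] at hlt
  exact ⟨hj, hlt⟩

theorem IsStablePartition.filter_map_castLE_finRange {n : ℕ} {p : Fin n → Prop}
    [DecidablePred p] {σ : Equiv.Perm (Fin n)} (hσ : IsStablePartition p σ) {t : Fin n}
    (ht : p (σ t)) :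
    ((List.finRange (σ t)).map (Fin.castLE (σ t).isLt.le)).filter (fun k => decide (p k)) =
      (List.finRange t).map fun j => σ (j.castLE t.isLt.le) := by
  refine List.Pairwise.eq_of_mem_iff (r := (· < ·)) ?_ ?_ fun k => ?_
  · apply List.Pairwise.filter
    rw [List.pairwise_map]
    exact (List.pairwise_lt_finRange _).imp id
  · rw [List.pairwise_map]
    exact (List.pairwise_lt_finRange _).imp fun {a b} h =>
      (hσ (b.castLE _) (a.castLE _) h (hσ t _ b.isLt ht).1).2
  simp only [List.mem_filter, List.mem_map, List.mem_finRange, true_and, decide_eq_true_eq]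
  constructor
  · rintro ⟨⟨a, ha⟩, hk⟩
    obtain ⟨s, rfl⟩ := σ.surjective k
    have hlt : σ s < σ t := Fin.lt_def.mpr (ha ▸ a.isLt)
    have hst : s < t := by
      rcases lt_trichotomy s t with h | rfl | h
      · exact h
      · exact absurd hlt (lt_irrefl _)
      · exact absurd (hσ s t h hk).2 hlt.asymm
    exact ⟨⟨s, hst⟩, rfl⟩
  · rintro ⟨j, rfl⟩
    exact ⟨⟨⟨_, (hσ t _ j.isLt ht).2⟩, rfl⟩, (hσ t _ j.isLt ht).1⟩

section Runs

attribute [local instance] Classical.propDecidable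

variable [Fintype V] (A : OnlineAlg) (G : SimpleGraph V)

theorem accepts_eq_decision (φ : Fin (Fintype.card V) ≃ V) (i : Fin (Fintype.card V)) :
    accepts A G φ i = A.decision (fun x y => decide (G.Adj x y))
      ((List.finRange i).map fun j => φ (j.castLE i.isLt.le)) (φ i) := by
  refine A.apply_congr (by simp) fun a b => ?_
  have hget : ∀ c : Fin (i + 1), φ ⟨c, by omega⟩ =
      ((List.finRange i).map fun j => φ (j.castLE i.isLt.le)).getD c (φ i) := by
    intro c
    rcases Nat.lt_succ_iff_lt_or_eq.mp c.isLt with hc | hc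
    · simp [List.getElem?_eq_getElem (show (c : ℕ) < (List.finRange i).length by simpa using hc)]
    · simp [hc]
  simp only [revealedMatrix, Fin.val_cast, ← hget]

theorem mem_acceptedSet_apply (φ : Fin (Fintype.card V) ≃ V) (i : Fin (Fintype.card V)) :
    φ i ∈ acceptedSet A G φ ↔ accepts A G φ i = true := by
  simp [acceptedSet]

variable {G} in
theorem le_onlineIndepNum {m : ℕ}
    (hA : ∀ φ, IsIndep G (acceptedSet A G φ) ∧ m ≤ (acceptedSet A G φ).card) :
    m ≤ onlineIndepNum G := by
  refine le_csSup ⟨Fintype.card V, ?_⟩ ⟨A, hA⟩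
  rintro k ⟨B, hB⟩
  exact (hB (Fintype.equivFin V).symm).2.trans (Finset.card_le_univ _)

def IsPointless (φ : Fin (Fintype.card V) ≃ V) (i : Fin (Fintype.card V)) : Prop :=
  ∃ j < i, accepts A G φ j = true ∧ G.Adj (φ j) (φ i)

def IsConservative (φ : Fin (Fintype.card V) ≃ V) : Prop :=
  ∀ i i', i < i' → IsPointless A G φ i →
    ∃ j < i, accepts A G φ j = true ∧ G.Adj (φ j) (φ i')

end Runs

def skipStep (A : OnlineAlg) (n : ℕ) (M : Fin (n + 1) → Fin (n + 1) → Bool)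
    (acc : Fin n → Bool) : Bool :=
  let fresh (k : Fin (n + 1)) : Bool :=
    decide (∀ j : Fin n, j.castSucc < k → acc j = true → M j.castSucc k = false)
  fresh (Fin.last n) &&
    A.decision M (((List.finRange n).map Fin.castSucc).filter fresh) (Fin.last n)

/-- `A` run on the requests that are not pointless for this algorithm itself; the pointless ones
are rejected and never shown to `A`. -/
def skipPointless (A : OnlineAlg) : (n : ℕ) → (Fin (n + 1) → Fin (n + 1) → Bool) → Bool
  | n, M => skipStep A n M fun j =>
      skipPointless A j fun a b => M (a.castLE (by omega)) (b.castLE (by omega))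
termination_by n => n
decreasing_by exact j.isLt

section Skip

attribute [local instance] Classical.propDecidable

variable [Fintype V] (A : OnlineAlg) (G : SimpleGraph V) (ψ : Fin (Fintype.card V) ≃ V)

theorem accepts_skipPointless_eq_skipStep (i : Fin (Fintype.card V)) :
    accepts (skipPointless A) G ψ i = skipStep A i (revealedMatrix G ψ i)
      fun j => accepts (skipPointless A) G ψ (j.castLE i.isLt.le) := by
  unfold accepts
  rw [skipPointless]
  rfl

theorem forall_revealedMatrix_eq_false_iff_not_isPointless (i : Fin (Fintype.card V))
    (k : Fin (i + 1)) :
    (∀ j : Fin i, j.castSucc < k →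
        accepts (skipPointless A) G ψ (j.castLE i.isLt.le) = true →
        revealedMatrix G ψ i j.castSucc k = false) ↔
      ¬ IsPointless (skipPointless A) G ψ (k.castLE i.isLt) := by
  simp only [IsPointless, revealedMatrix, decide_eq_false_iff_not, not_exists, not_and]
  constructor
  · intro h j hj hacc
    exact h ⟨j, Nat.lt_of_lt_of_le (Fin.lt_def.mp hj) (Nat.lt_succ_iff.mp k.isLt)⟩ hj hacc
  · intro h j hj hacc
    exact h _ hj hacc

theorem accepts_skipPointless (i : Fin (Fintype.card V)) :
    accepts (skipPointless A) G ψ i =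
      (decide (¬ IsPointless (skipPointless A) G ψ i) &&
        A.decision (fun x y => decide (G.Adj x y))
          ((((List.finRange i).map (Fin.castLE i.isLt.le)).filter
            fun k => decide (¬ IsPointless (skipPointless A) G ψ k)).map ψ) (ψ i)) := by
  rw [accepts_skipPointless_eq_skipStep, skipStep]
  simp only [forall_revealedMatrix_eq_false_iff_not_isPointless A G ψ i]
  congr 1
  set ψ' : Fin (i + 1) → V := fun a => ψ (a.castLE i.isLt)
  change A.decision (fun x y => decide (G.Adj (ψ' x) (ψ' y))) _ _ = _
  refine (A.decision_map (fun x y => decide (G.Adj x y)) ψ' _ _).symm.trans ?_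
  congr 1
  simp only [List.filter_map, List.map_map]
  rfl

variable {ψ} in
theorem not_isPointless_of_accepts_skipPointless {i : Fin (Fintype.card V)}
    (h : accepts (skipPointless A) G ψ i = true) :
    ¬ IsPointless (skipPointless A) G ψ i := by
  rw [accepts_skipPointless, Bool.and_eq_true, decide_eq_true_iff] at h
  exact h.1

theorem isIndep_acceptedSet_skipPointless : IsIndep G (acceptedSet (skipPointless A) G ψ) := by
  have key : ∀ i j, j < i → accepts (skipPointless A) G ψ j = true →
      accepts (skipPointless A) G ψ i = true → ¬ G.Adj (ψ j) (ψ i) :=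
    fun i j hji hj hi hadj => not_isPointless_of_accepts_skipPointless A G hi ⟨j, hji, hj, hadj⟩
  intro a ha b hb hab
  simp only [acceptedSet, Finset.mem_filter, Finset.mem_univ, true_and] at ha hb
  rcases lt_trichotomy (ψ.symm a) (ψ.symm b) with h | h | h
  · exact key _ _ h ha hb (by simpa using hab)
  · exact G.ne_of_adj hab (ψ.symm.injective h)
  · exact key _ _ h hb ha (by simpa using hab.symm)

end Skip

section Reordering

attribute [local instance] Classical.propDecidable

variable [Fintype V] (A : OnlineAlg) (G : SimpleGraph V) {ψ : Fin (Fintype.card V) ≃ V}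
  {σ : Equiv.Perm (Fin (Fintype.card V))}

theorem accepts_trans_eq_accepts_skipPointless
    (hσ : IsStablePartition (fun k => ¬ IsPointless (skipPointless A) G ψ k) σ)
    {t : Fin (Fintype.card V)} (ht : ¬ IsPointless (skipPointless A) G ψ (σ t)) :
    accepts A G (σ.trans ψ) t = accepts (skipPointless A) G ψ (σ t) := by
  rw [accepts_eq_decision, accepts_skipPointless, decide_eq_true ht, Bool.true_and,
    hσ.filter_map_castLE_finRange ht, List.map_map]
  rfl

theorem exists_accepted_neighbor_of_isPointless
    (hσ : IsStablePartition (fun k => ¬ IsPointless (skipPointless A) G ψ k) σ)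
    {t : Fin (Fintype.card V)} (ht : IsPointless (skipPointless A) G ψ (σ t)) :
    ∃ s, ¬ IsPointless (skipPointless A) G ψ (σ s) ∧ accepts A G (σ.trans ψ) s = true ∧
      G.Adj ((σ.trans ψ) s) ((σ.trans ψ) t) := by
  obtain ⟨k, -, hacc, hadj⟩ := ht
  obtain ⟨s, rfl⟩ := σ.surjective k
  have hs := not_isPointless_of_accepts_skipPointless A G hacc
  exact ⟨s, hs, (accepts_trans_eq_accepts_skipPointless A G hσ hs).trans hacc, hadj⟩

theorem isConservative_trans
    (hσ : IsStablePartition (fun k => ¬ IsPointless (skipPointless A) G ψ k) σ) :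
    IsConservative A G (σ.trans ψ) := by
  intro i i' hii' ⟨j, hji, hj, hadj⟩
  by_cases hi : IsPointless (skipPointless A) G ψ (σ i)
  · obtain ⟨s, hs, hacc, hadj'⟩ :=
      exists_accepted_neighbor_of_isPointless A G hσ (by_contra fun h => (hσ i' i hii' h).1 hi)
    refine ⟨s, lt_of_not_ge fun his => ?_, hacc, hadj'⟩
    rcases his.lt_or_eq with h | rfl
    · exact (hσ s i h hs).1 hi
    · exact hs hi
  · obtain ⟨hj', hji'⟩ := hσ i j hji hi
    rw [accepts_trans_eq_accepts_skipPointless A G hσ hj'] at hj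
    exact absurd ⟨σ j, hji', hj, hadj⟩ hi

theorem acceptedSet_trans_eq_of_isIndep
    (hσ : IsStablePartition (fun k => ¬ IsPointless (skipPointless A) G ψ k) σ)
    (hind : IsIndep G (acceptedSet A G (σ.trans ψ))) :
    acceptedSet A G (σ.trans ψ) = acceptedSet (skipPointless A) G ψ := by
  have haccepts : ∀ t, accepts A G (σ.trans ψ) t = accepts (skipPointless A) G ψ (σ t) := by
    intro t
    by_cases ht : IsPointless (skipPointless A) G ψ (σ t)
    · obtain ⟨s, -, hs, hadj⟩ := exists_accepted_neighbor_of_isPointless A G hσ ht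
      have hA : accepts A G (σ.trans ψ) t = false := by
        rw [Bool.eq_false_iff]
        exact fun ht => hind _ ((mem_acceptedSet_apply A G _ s).mpr hs) _
          ((mem_acceptedSet_apply A G _ t).mpr ht) hadj
      have hB : accepts (skipPointless A) G ψ (σ t) = false := by
        rw [Bool.eq_false_iff]
        exact fun h => not_isPointless_of_accepts_skipPointless A G h ht
      rw [hA, hB]
    · exact accepts_trans_eq_accepts_skipPointless A G hσ ht
  ext v
  simp [acceptedSet, haccepts]

end Reordering

/-- for every graph `G` and online independent set algorithm `A` there is an
ordering `φ` that is conservative with respect to the run of `A` (whenever the vertex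
revealed at step `i` has a neighbor among the already accepted vertices, so does every
vertex revealed later) and on which `A` accepts an independent set of size at most
`I^O(G)`. -/
theorem statement6 {V : Type} [Fintype V] (G : SimpleGraph V) (A : OnlineAlg) :
    ∃ φ : Fin (Fintype.card V) ≃ V,
      (∀ i i' : Fin (Fintype.card V), i < i' →
        (∃ j : Fin (Fintype.card V), j < i ∧ accepts A G φ j = true ∧ G.Adj (φ j) (φ i)) →
        (∃ j : Fin (Fintype.card V), j < i ∧ accepts A G φ j = true ∧ G.Adj (φ j) (φ i'))) ∧
      (IsIndep G (acceptedSet A G φ) →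
        (acceptedSet A G φ).card ≤ onlineIndepNum G) := by
  have : Nonempty (Fin (Fintype.card V) ≃ V) := ⟨(Fintype.equivFin V).symm⟩
  obtain ⟨ψ, hψ⟩ := Finite.exists_min fun ψ : Fin (Fintype.card V) ≃ V =>
    (acceptedSet (skipPointless A) G ψ).card
  obtain ⟨σ, hσ⟩ := exists_isStablePartition fun k => ¬ IsPointless (skipPointless A) G ψ k
  refine ⟨σ.trans ψ, isConservative_trans A G hσ, fun hind => ?_⟩
  rw [acceptedSet_trans_eq_of_isIndep A G hσ hind]
  exact le_onlineIndepNum _ fun φ => ⟨isIndep_acceptedSet_skipPointless A G φ, hψ φ⟩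

end OnlinePaper
end

section
/- Let G be a finite simple graph with at least one isolated vertex. Then for every deterministic online algorithm ALG for Online Dominating Set, GDS(G) ≤ ALG(G); that is, the greedy algorithm's worst-case dominating set size on G is at most that of every online algorithm. -/
namespace OnlinePaper

variable {V : Type}

/-!
GDS accepts an independent set containing every isolated vertex. Fix an ordering on which GDS
outputs a set `S` of the worst-case size, and reveal `S` first to `A`. While vertices of `S`
arrive, `A` sees only edgeless graphs, and it cannot tell the `i`-th of them from an isolated
vertex `v ∈ S` revealed at position `i`, which it must accept to dominate `v`. So `A` accepts
all of `S` on this ordering.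
-/

section

variable [Fintype V] {A : OnlineAlg} {G : SimpleGraph V}

lemma mem_acceptedSet_iff {φ : Fin (Fintype.card V) ≃ V} {v : V} :
    v ∈ acceptedSet A G φ ↔ accepts A G φ (φ.symm v) = true := by
  simp [acceptedSet]

lemma accepts_gdsAlg_iff {φ : Fin (Fintype.card V) ≃ V} {i : Fin (Fintype.card V)} :
    accepts gdsAlg G φ i = true ↔
      ∀ j < i, accepts gdsAlg G φ j = true → ¬ G.Adj (φ j) (φ i) := by
  classical
  rw [accepts, gdsAlg, gisAlg, gisAux, decide_eq_true_iff]
  constructor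
  · intro h j hj hacc hadj
    have := h ⟨j, hj⟩ hacc
    simp only [revealedMatrix, Fin.castSucc_mk, Fin.eta, Fin.val_last,
      decide_eq_false_iff_not] at this
    exact this hadj
  · intro h j hacc
    simpa [revealedMatrix] using h ⟨j, by omega⟩ (Fin.mk_lt_mk.mpr j.isLt) hacc

lemma gdsAlg_accepts_isolated {v : V} (hv : IsIsolated G v) (φ : Fin (Fintype.card V) ≃ V) :
    v ∈ acceptedSet gdsAlg G φ := by
  rw [mem_acceptedSet_iff, accepts_gdsAlg_iff, Equiv.apply_symm_apply]
  exact fun j _ _ hadj => hv _ hadj.symm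

lemma isIndep_acceptedSet_gdsAlg (φ : Fin (Fintype.card V) ≃ V) :
    IsIndep G (acceptedSet gdsAlg G φ) := by
  have earlier_not_adj : ∀ a ∈ acceptedSet gdsAlg G φ, ∀ b ∈ acceptedSet gdsAlg G φ,
      φ.symm a < φ.symm b → ¬ G.Adj a b := by
    intro a ha b hb hlt
    rw [mem_acceptedSet_iff] at ha hb
    simpa using accepts_gdsAlg_iff.mp hb _ hlt ha
  intro a ha b hb hadj
  rcases lt_trichotomy (φ.symm a) (φ.symm b) with hlt | heq | hgt
  · exact earlier_not_adj a ha b hb hlt hadj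
  · exact hadj.ne (φ.symm.injective heq)
  · exact earlier_not_adj b hb a ha hgt hadj.symm

lemma exists_equiv_mem_iff_lt (S : Finset V) :
    ∃ ψ : Fin (Fintype.card V) ≃ V, ∀ j, ψ j ∈ S ↔ (j : ℕ) < S.card := by
  classical
  let e₀ := (Fintype.equivFin V).symm
  let e : {j : Fin (Fintype.card V) // (j : ℕ) < S.card} ≃ {j // e₀ j ∈ S} :=
    (Fin.castLEquiv S.card_le_univ).symm.trans
      (S.equivFin.symm.trans (e₀.subtypeEquiv (p := fun j => e₀ j ∈ S) fun _ => Iff.rfl).symm)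
  refine ⟨e.extendSubtype.trans e₀, fun j => ⟨fun h => ?_, e.extendSubtype_mem j⟩⟩
  by_contra hj
  exact e.extendSubtype_not_mem j hj h

lemma exists_equiv_mem_iff_lt_apply_eq {S : Finset V} {v : V} (hv : v ∈ S)
    {i : Fin (Fintype.card V)} (hi : (i : ℕ) < S.card) :
    ∃ ψ : Fin (Fintype.card V) ≃ V, (∀ j, ψ j ∈ S ↔ (j : ℕ) < S.card) ∧ ψ i = v := by
  obtain ⟨ψ, hψ⟩ := exists_equiv_mem_iff_lt S
  have hv' : (ψ.symm v : ℕ) < S.card := by rw [← hψ, Equiv.apply_symm_apply]; exact hv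
  refine ⟨(Equiv.swap i (ψ.symm v)).trans ψ, fun j => ?_, by simp⟩
  rw [Equiv.trans_apply, hψ]
  rcases eq_or_ne j i with rfl | hji
  · simp [hi, hv']
  rcases eq_or_ne j (ψ.symm v) with rfl | hjv
  · simp [hi, hv']
  · rw [Equiv.swap_apply_of_ne_of_ne hji hjv]

lemma revealedMatrix_eq_false_of_isIndep {S : Finset V} (hS : IsIndep G S)
    {φ : Fin (Fintype.card V) ≃ V} {i : Fin (Fintype.card V)} (h : ∀ j ≤ i, φ j ∈ S) :
    revealedMatrix G φ i = fun _ _ => false := by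
  classical
  funext a b
  exact decide_eq_false
    (hS _ (h _ (Nat.lt_succ_iff.mp a.isLt)) _ (h _ (Nat.lt_succ_iff.mp b.isLt)))

lemma subset_acceptedSet_of_isolated_mem (hA : ∀ φ, IsDom G (acceptedSet A G φ)) {v : V}
    (hv : IsIsolated G v) {S : Finset V} (hS : IsIndep G S) (hvS : v ∈ S)
    {ψ : Fin (Fintype.card V) ≃ V} (hψ : ∀ j, ψ j ∈ S ↔ (j : ℕ) < S.card) :
    S ⊆ acceptedSet A G ψ := by
  have prefix_mem : ∀ {φ : Fin (Fintype.card V) ≃ V}, (∀ j, φ j ∈ S ↔ (j : ℕ) < S.card) →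
      ∀ {i : Fin (Fintype.card V)}, (i : ℕ) < S.card → ∀ j ≤ i, φ j ∈ S :=
    fun hφ _ hi j hj => (hφ j).mpr (lt_of_le_of_lt hj hi)
  have accepts_edgeless : ∀ i : Fin (Fintype.card V), (i : ℕ) < S.card →
      A i (fun _ _ => false) = true := by
    intro i hi
    obtain ⟨φ, hφ, hφi⟩ := exists_equiv_mem_iff_lt_apply_eq hvS hi
    rcases hA φ v with hmem | ⟨u, -, hadj⟩
    · rwa [mem_acceptedSet_iff, ← hφi, Equiv.symm_apply_apply, accepts,
        revealedMatrix_eq_false_of_isIndep hS (prefix_mem hφ hi)] at hmem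
    · exact absurd hadj.symm (hv u)
  intro u hu
  have hu' : ((ψ.symm u : Fin _) : ℕ) < S.card := by rwa [← hψ, Equiv.apply_symm_apply]
  rw [mem_acceptedSet_iff, accepts, revealedMatrix_eq_false_of_isIndep hS (prefix_mem hψ hu')]
  exact accepts_edgeless _ hu'

variable (A G)

lemma bddAbove_card_acceptedSet :
    BddAbove {m | ∃ φ : Fin (Fintype.card V) ≃ V, (acceptedSet A G φ).card = m} :=
  ⟨Fintype.card V, by rintro _ ⟨φ, rfl⟩; exact Finset.card_le_univ _⟩

lemma card_acceptedSet_le_maxScore (φ : Fin (Fintype.card V) ≃ V) :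
    (acceptedSet A G φ).card ≤ maxScore A G :=
  le_csSup (bddAbove_card_acceptedSet A G) ⟨φ, rfl⟩

lemma exists_card_acceptedSet_eq_maxScore :
    ∃ φ : Fin (Fintype.card V) ≃ V, (acceptedSet A G φ).card = maxScore A G :=
  Nat.sSup_mem (s := {m | ∃ φ : Fin (Fintype.card V) ≃ V, (acceptedSet A G φ).card = m})
    ⟨_, (Fintype.equivFin V).symm, rfl⟩ (bddAbove_card_acceptedSet A G)

end

/-- if `G` has at least one isolated vertex then every online dominating set
algorithm `A` satisfies `GDS(G) ≤ A(G)`. -/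
theorem statement12 {V : Type} [Fintype V] (G : SimpleGraph V)
    (hG : ∃ v : V, IsIsolated G v) (A : OnlineAlg)
    (hA : ∀ φ : Fin (Fintype.card V) ≃ V, IsDom G (acceptedSet A G φ)) :
    maxScore gdsAlg G ≤ maxScore A G := by
  obtain ⟨v, hv⟩ := hG
  obtain ⟨φ, hφ⟩ := exists_card_acceptedSet_eq_maxScore gdsAlg G
  obtain ⟨ψ, hψ⟩ := exists_equiv_mem_iff_lt (acceptedSet gdsAlg G φ)
  calc maxScore gdsAlg G = (acceptedSet gdsAlg G φ).card := hφ.symm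
    _ ≤ (acceptedSet A G ψ).card :=
      Finset.card_le_card <| subset_acceptedSet_of_isolated_mem hA hv
        (isIndep_acceptedSet_gdsAlg φ) (gdsAlg_accepts_isolated hv φ) hψ
    _ ≤ maxScore A G := card_acceptedSet_le_maxScore A G ψ

end OnlinePaper
end

section
/- For every n ≥ 4 and every k ≥ 0, consider the graph G_{n,k} with vertices x, y, v_1, …, v_n together with k additional isolated vertices, and edges {x,y} and {x,v_i}, {y,v_i} for 1 ≤ i ≤ n. For Online Maximal Forest, the greedy algorithm satisfies GF(G_{n,k}) = k + 2, and there exists a deterministic online algorithm ALG with ALG(G_{n,k}) ≥ k + n − 1; in particular, since k + n − 1 > k + 2, the greedy algorithm is not online optimal on G_{n,k}. -/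
namespace OnlinePaper

variable {V : Type}

/-! ### Online Maximal Forest -/

/-- The graph on the revealed vertices described by a Boolean adjacency matrix. -/
def matrixGraph {n : ℕ} (M : Fin n → Fin n → Bool) : SimpleGraph (Fin n) where
  Adj a b := a ≠ b ∧ (M a b = true ∨ M b a = true)
  symm := ⟨fun _ _ h => ⟨h.1.symm, h.2.symm⟩⟩
  loopless := ⟨fun _ h => h.1 rfl⟩

/-- `s` induces an acyclic subgraph (a forest) of `G`. -/
def IsForestSet (G : SimpleGraph V) (s : Finset V) : Prop :=
  (G.induce (↑s : Set V)).IsAcyclic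

/-- The greedy decision for Online Maximal Forest: accept the newly revealed vertex iff the
previously accepted vertices together with the new vertex still induce an acyclic subgraph
of the revealed graph. -/
noncomputable def gfAux : (n : ℕ) → (Fin (n + 1) → Fin (n + 1) → Bool) → Bool
  | n, M => by
    classical
    exact decide (((matrixGraph M).induce
      {a : Fin (n + 1) | a = Fin.last n ∨ ∃ h : a.val < n,
        gfAux a.val (fun x y => M (Fin.castLE (Nat.succ_le_succ h.le) x)
          (Fin.castLE (Nat.succ_le_succ h.le) y)) = true}).IsAcyclic)
termination_by n => n
decreasing_by all_goals exact h

/-- `GF`, the greedy algorithm for Online Maximal Forest. -/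
noncomputable def gfAlg : OnlineAlg := fun n M => gfAux n M

/-- The graph `G_{n,k}`: vertices `x = inl (inl true)`, `y = inl (inl false)`,
`v_i = inl (inr i)` for `i < n`, and `k` further isolated vertices `inr j`; edges `{x, y}`
and `{x, v_i}`, `{y, v_i}` for all `i`. -/
def gnkGraph (n k : ℕ) : SimpleGraph ((Bool ⊕ Fin n) ⊕ Fin k) where
  Adj a b :=
    (∃ u v : Bool, u ≠ v ∧ a = Sum.inl (Sum.inl u) ∧ b = Sum.inl (Sum.inl v)) ∨
    (∃ (u : Bool) (i : Fin n), a = Sum.inl (Sum.inl u) ∧ b = Sum.inl (Sum.inr i)) ∨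
    (∃ (u : Bool) (i : Fin n), a = Sum.inl (Sum.inr i) ∧ b = Sum.inl (Sum.inl u))
  symm := by
    refine ⟨?_⟩
    rintro a b (⟨u, v, huv, ha, hb⟩ | ⟨u, i, ha, hb⟩ | ⟨u, i, ha, hb⟩)
    · exact Or.inl ⟨v, u, huv.symm, hb, ha⟩
    · exact Or.inr (Or.inr ⟨u, i, hb, ha⟩)
    · exact Or.inr (Or.inl ⟨u, i, hb, ha⟩)
  loopless := by
    refine ⟨?_⟩
    rintro a (⟨u, v, huv, ha, hb⟩ | ⟨u, i, ha, hb⟩ | ⟨u, i, ha, hb⟩) <;> subst ha <;> simp_all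


/-!
On `G_{n,k}` a set of vertices induces a forest unless it contains both hubs `x`, `y` and some
`v_i`, since the only cycles are the triangles `x y v_i`. Greedy accepts every isolated vertex
and at least two further ones (when it rejects a hub it has already accepted the other hub and
some `v_i`), and revealing `x` and `y` first makes it reject every `v_i`. The better algorithm is greedy that moreover rejects the vertex completing
the first edge and the vertex closing a triangle that is the whole revealed graph so far. It
never accepts both hubs, and each of its three rejection reasons applies at most once in a run,
so it rejects at most three vertices.
-/

open Function

section GraphLemmas

variable {W V : Type}

lemma isAcyclic_induce_of_forall_adj {G : SimpleGraph V} {s : Set V} (c : V)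
    (h : ∀ a ∈ s, ∀ b ∈ s, G.Adj a b → a = c ∨ b = c) : (G.induce s).IsAcyclic :=
  ((SimpleGraph.isAcyclic_starGraph c).induce s).anti fun a b (hab : G.Adj a b) =>
    show (SimpleGraph.starGraph c).Adj a b from
      SimpleGraph.starGraph_adj.mpr ⟨G.ne_of_adj hab, h a a.2 b b.2 hab⟩

lemma not_isAcyclic_of_adj_of_adj_of_adj {H : SimpleGraph W} {a b c : W}
    (hab : H.Adj a b) (hac : H.Adj a c) (hbc : H.Adj b c) : ¬ H.IsAcyclic := by
  classical
  obtain ⟨u, w, hcyc, -⟩ := SimpleGraph.is3Clique_iff_exists_cycle_length_three.mp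
    ⟨{a, b, c}, SimpleGraph.is3Clique_triple_iff.mpr ⟨hab, hac, hbc⟩⟩
  exact fun h => h w hcyc

lemma isAcyclic_induce_of_subset {G : SimpleGraph V} {s t : Set V} (hst : s ⊆ t)
    (ht : (G.induce t).IsAcyclic) : (G.induce s).IsAcyclic :=
  ht.embedding (G.induceHomOfLE hst)

lemma isAcyclic_induce_comap_iff (G : SimpleGraph V) {f : W → V} (hf : Injective f)
    (s : Set W) : ((G.comap f).induce s).IsAcyclic ↔ (G.induce (f '' s)).IsAcyclic :=
  SimpleGraph.Iso.isAcyclic_iff { toEquiv := Equiv.Set.image f s hf, map_rel_iff' := Iff.rfl }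

end GraphLemmas

lemma false_of_three_distinct_mem_pair {α : Type} {x y z a b : α} (hxy : x ≠ y) (hxz : x ≠ z)
    (hyz : y ≠ z) (hx : x = a ∨ x = b) (hy : y = a ∨ y = b) (hz : z = a ∨ z = b) : False := by
  rcases hx with rfl | rfl <;> rcases hy with rfl | rfl <;> rcases hz with rfl | rfl <;>
    simp_all

lemma eq_of_forall_lt_imp_false {α : Type} [LinearOrder α] {p : α → Prop}
    (h : ∀ i i', i < i' → p i → p i' → False) {i i' : α} (hi : p i) (hi' : p i') : i = i' := by
  rcases lt_trichotomy i i' with hlt | heq | hlt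
  exacts [(h _ _ hlt hi hi').elim, heq, (h _ _ hlt hi' hi).elim]

section Run

variable {V : Type} [Fintype V] (A : OnlineAlg) (G : SimpleGraph V)
  (φ : Fin (Fintype.card V) ≃ V)

def revealedSet (i : Fin (Fintype.card V)) : Set V := {v | φ.symm v ≤ i}

def acceptedBefore (m : ℕ) : Set V :=
  {v | (φ.symm v).val < m ∧ accepts A G φ (φ.symm v) = true}

def candidateSet (i : Fin (Fintype.card V)) : Set V := insert (φ i) (acceptedBefore A G φ i)

/-- The vertex that the algorithm sees as index `a` at step `i`. -/
def revealedVertex (i : Fin (Fintype.card V)) : Fin (i.val + 1) → V :=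
  φ ∘ Fin.castLE i.isLt

lemma revealedVertex_injective (i : Fin (Fintype.card V)) : Injective (revealedVertex φ i) :=
  φ.injective.comp (Fin.castLE_injective _)

lemma range_revealedVertex (i : Fin (Fintype.card V)) :
    Set.range (revealedVertex φ i) = revealedSet φ i := by
  ext v
  constructor
  · rintro ⟨a, rfl⟩
    show φ.symm (φ _) ≤ i
    rw [Equiv.symm_apply_apply, Fin.le_def]
    exact Nat.le_of_lt_succ a.isLt
  · intro hv
    refine ⟨⟨(φ.symm v).val, Nat.lt_succ_of_le hv⟩, ?_⟩
    simp [revealedVertex]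

lemma matrixGraph_revealedMatrix (i : Fin (Fintype.card V)) :
    matrixGraph (revealedMatrix G φ i) = G.comap (revealedVertex φ i) := by
  ext a b
  simp only [matrixGraph, revealedMatrix, decide_eq_true_eq, SimpleGraph.comap_adj]
  change a ≠ b ∧ (G.Adj (revealedVertex φ i a) (revealedVertex φ i b) ∨
    G.Adj (revealedVertex φ i b) (revealedVertex φ i a)) ↔ _
  rw [G.adj_comm (revealedVertex φ i b), or_self, and_iff_right_iff_imp]
  exact fun h hab => h.ne (congrArg _ hab)

/-- The set an algorithm defined by recursion on the number of revealed vertices (such as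
`gfAux`) computes as its previously accepted vertices together with the new one. -/
lemma image_revealedVertex_eq_candidateSet
    (aux : (n : ℕ) → (Fin (n + 1) → Fin (n + 1) → Bool) → Bool) (i : Fin (Fintype.card V)) :
    revealedVertex φ i '' {a : Fin (i.val + 1) | a = Fin.last i.val ∨ ∃ h : a.val < i.val,
        aux a.val (fun x y => revealedMatrix G φ i (Fin.castLE (Nat.succ_le_succ h.le) x)
          (Fin.castLE (Nat.succ_le_succ h.le) y)) = true} = candidateSet aux G φ i := by
  ext v
  constructor
  · rintro ⟨a, ha | ⟨ha, hacc⟩, rfl⟩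
    · exact Or.inl (congrArg φ (Fin.ext (by simp [ha])))
    · refine Or.inr ⟨?_, ?_⟩
      · simpa [revealedVertex] using ha
      · simp only [revealedVertex, comp_apply, Equiv.symm_apply_apply]
        exact hacc
  · rintro (rfl | ⟨hlt, hacc⟩)
    · exact ⟨Fin.last i.val, Or.inl rfl, rfl⟩
    · refine ⟨⟨(φ.symm v).val, by omega⟩, Or.inr ⟨hlt, hacc⟩, ?_⟩
      simp [revealedVertex]

lemma apply_mem_revealedSet (i : Fin (Fintype.card V)) : φ i ∈ revealedSet φ i := by
  simp [revealedSet]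

lemma revealedSet_mono {i i' : Fin (Fintype.card V)} (h : i ≤ i') :
    revealedSet φ i ⊆ revealedSet φ i' :=
  fun _ hv => le_trans hv h

lemma apply_notMem_revealedSet {i i' : Fin (Fintype.card V)} (h : i < i') :
    φ i' ∉ revealedSet φ i := by
  simpa [revealedSet] using h

lemma candidateSet_subset_revealedSet (i : Fin (Fintype.card V)) :
    candidateSet A G φ i ⊆ revealedSet φ i := by
  rintro v (rfl | ⟨hlt, -⟩)
  · exact apply_mem_revealedSet φ i
  · exact le_of_lt hlt

lemma card_acceptedSet_add_card_rejected :
    (acceptedSet A G φ).card + (Finset.univ.filter fun i => ¬ accepts A G φ i = true).card =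
      Fintype.card V := by
  have : (acceptedSet A G φ).card = (Finset.univ.filter fun i => accepts A G φ i = true).card :=
    Finset.card_equiv φ.symm (by simp [acceptedSet])
  rw [this, Finset.card_filter_add_card_filter_not, Finset.card_univ, Fintype.card_fin]

variable {A G φ}

lemma mem_acceptedSet {v : V} : v ∈ acceptedSet A G φ ↔ accepts A G φ (φ.symm v) = true := by
  simp [acceptedSet]

lemma mem_acceptedSet_of_mem_candidateSet {i : Fin (Fintype.card V)} {v : V}
    (hv : v ∈ candidateSet A G φ i) (hne : v ≠ φ i) : v ∈ acceptedSet A G φ :=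
  mem_acceptedSet.mpr ((Set.mem_insert_iff.mp hv).resolve_left hne).2

lemma isAcyclic_induce_acceptedBefore
    (hA : ∀ i, accepts A G φ i = true → (G.induce (candidateSet A G φ i)).IsAcyclic) (m : ℕ) :
    (G.induce (acceptedBefore A G φ m)).IsAcyclic := by
  induction m with
  | zero => exact fun v _ _ => absurd v.2.1 (Nat.not_lt_zero _)
  | succ m ih =>
    by_cases h : ∃ i : Fin (Fintype.card V), i.val = m ∧ accepts A G φ i = true
    · obtain ⟨i, rfl, hi⟩ := h
      refine isAcyclic_induce_of_subset (fun v ⟨hlt, hv⟩ => ?_) (hA i hi)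
      rcases Nat.lt_succ_iff_lt_or_eq.mp hlt with hlt | heq
      · exact Or.inr ⟨hlt, hv⟩
      · exact Or.inl (φ.symm_apply_eq.mp (Fin.ext heq))
    · refine isAcyclic_induce_of_subset (fun v ⟨hlt, hv⟩ => ?_) ih
      refine ⟨?_, hv⟩
      rcases Nat.lt_succ_iff_lt_or_eq.mp hlt with hlt | heq
      · exact hlt
      · exact absurd ⟨_, heq, hv⟩ h

lemma isForestSet_acceptedSet
    (hA : ∀ i, accepts A G φ i = true → (G.induce (candidateSet A G φ i)).IsAcyclic) :
    IsForestSet G (acceptedSet A G φ) := by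
  have : (acceptedSet A G φ : Set V) = acceptedBefore A G φ (Fintype.card V) := by
    ext v
    simp [acceptedSet, acceptedBefore]
  rw [IsForestSet, this]
  exact isAcyclic_induce_acceptedBefore hA _

end Run

section Greedy

variable {V : Type} [Fintype V] (G : SimpleGraph V) (φ : Fin (Fintype.card V) ≃ V)

lemma accepts_gfAlg_iff (i : Fin (Fintype.card V)) :
    accepts gfAlg G φ i = true ↔ (G.induce (candidateSet gfAlg G φ i)).IsAcyclic := by
  change gfAux i.val (revealedMatrix G φ i) = true ↔ _
  rw [gfAux]
  simp only [decide_eq_true_eq]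
  rw [matrixGraph_revealedMatrix, isAcyclic_induce_comap_iff G (revealedVertex_injective φ i),
    image_revealedVertex_eq_candidateSet]
  rfl

lemma isForestSet_acceptedSet_gfAlg : IsForestSet G (acceptedSet gfAlg G φ) :=
  isForestSet_acceptedSet fun i => (accepts_gfAlg_iff G φ i).mp

end Greedy

section Rules

variable {W : Type} (H : SimpleGraph W) (R : Set W) (w : W)

def CompletesFirstEdge : Prop :=
  (∃ u ∈ R, H.Adj w u) ∧ ∀ a ∈ R, ∀ b ∈ R, H.Adj a b → a = w ∨ b = w

def CompletesLoneTriangle : Prop :=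
  ∃ a ∈ R, ∃ b ∈ R, H.Adj w a ∧ H.Adj w b ∧ H.Adj a b ∧
    ∀ c ∈ R, ∀ d ∈ R, H.Adj c d → c = w ∨ c = a ∨ c = b

variable {V : Type} (G : SimpleGraph V) {f : W → V}

lemma completesFirstEdge_comap_iff (hf : Injective f) :
    CompletesFirstEdge (G.comap f) Set.univ w ↔ CompletesFirstEdge G (Set.range f) (f w) := by
  simp [CompletesFirstEdge, hf.eq_iff]

lemma completesLoneTriangle_comap_iff (hf : Injective f) :
    CompletesLoneTriangle (G.comap f) Set.univ w ↔
      CompletesLoneTriangle G (Set.range f) (f w) := by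
  simp [CompletesLoneTriangle, hf.eq_iff]

end Rules

/-- Greedy forest, except that it also rejects the vertex completing the first edge and the
vertex closing a triangle that is the whole revealed graph. -/
noncomputable def cautiousGfAux : (n : ℕ) → (Fin (n + 1) → Fin (n + 1) → Bool) → Bool
  | n, M => by
    classical
    exact decide (¬ CompletesFirstEdge (matrixGraph M) Set.univ (Fin.last n) ∧
      ¬ CompletesLoneTriangle (matrixGraph M) Set.univ (Fin.last n) ∧
      ((matrixGraph M).induce {a : Fin (n + 1) | a = Fin.last n ∨ ∃ h : a.val < n,
        cautiousGfAux a.val (fun x y => M (Fin.castLE (Nat.succ_le_succ h.le) x)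
          (Fin.castLE (Nat.succ_le_succ h.le) y)) = true}).IsAcyclic)
termination_by n => n
decreasing_by all_goals exact h

noncomputable def cautiousGfAlg : OnlineAlg := fun n M => cautiousGfAux n M

section Cautious

variable {V : Type} [Fintype V] (G : SimpleGraph V) (φ : Fin (Fintype.card V) ≃ V)

lemma accepts_cautiousGfAlg_iff (i : Fin (Fintype.card V)) :
    accepts cautiousGfAlg G φ i = true ↔
      ¬ CompletesFirstEdge G (revealedSet φ i) (φ i) ∧
        ¬ CompletesLoneTriangle G (revealedSet φ i) (φ i) ∧
        (G.induce (candidateSet cautiousGfAlg G φ i)).IsAcyclic := by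
  change cautiousGfAux i.val (revealedMatrix G φ i) = true ↔ _
  rw [cautiousGfAux]
  simp only [decide_eq_true_eq]
  rw [matrixGraph_revealedMatrix, completesFirstEdge_comap_iff _ G (revealedVertex_injective φ i),
    completesLoneTriangle_comap_iff _ G (revealedVertex_injective φ i),
    isAcyclic_induce_comap_iff G (revealedVertex_injective φ i),
    image_revealedVertex_eq_candidateSet, range_revealedVertex]
  rfl

lemma isForestSet_acceptedSet_cautiousGfAlg : IsForestSet G (acceptedSet cautiousGfAlg G φ) :=
  isForestSet_acceptedSet fun i h => ((accepts_cautiousGfAlg_iff G φ i).mp h).2.2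

lemma completesFirstEdge_revealedSet_unique {i i' : Fin (Fintype.card V)}
    (hi : CompletesFirstEdge G (revealedSet φ i) (φ i))
    (hi' : CompletesFirstEdge G (revealedSet φ i') (φ i')) : i = i' := by
  refine eq_of_forall_lt_imp_false (p := fun i => CompletesFirstEdge G (revealedSet φ i) (φ i))
    (fun i i' hlt hi hi' => ?_) hi hi'
  obtain ⟨⟨u, hu, hadj⟩, -⟩ := hi
  have hsub := revealedSet_mono φ hlt.le
  rcases hi'.2 _ (hsub (apply_mem_revealedSet φ i)) u (hsub hu) hadj with h | h
  · exact apply_notMem_revealedSet φ hlt (h ▸ apply_mem_revealedSet φ i)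
  · exact apply_notMem_revealedSet φ hlt (h ▸ hu)

lemma completesLoneTriangle_revealedSet_unique {i i' : Fin (Fintype.card V)}
    (hi : CompletesLoneTriangle G (revealedSet φ i) (φ i))
    (hi' : CompletesLoneTriangle G (revealedSet φ i') (φ i')) : i = i' := by
  refine eq_of_forall_lt_imp_false
    (p := fun i => CompletesLoneTriangle G (revealedSet φ i) (φ i)) (fun i i' hlt hi hi' => ?_)
    hi hi'
  obtain ⟨a, ha, b, hb, hwa, hwb, hab, -⟩ := hi
  obtain ⟨a', -, b', -, -, -, -, hall⟩ := hi'
  have hsub := revealedSet_mono φ hlt.le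
  -- the three vertices of the earlier triangle are old non-isolated vertices, so `a'` or `b'`
  have hold : ∀ c ∈ revealedSet φ i, ∀ d ∈ revealedSet φ i, G.Adj c d → c = a' ∨ c = b' :=
    fun c hc d hd hcd => (hall c (hsub hc) d (hsub hd) hcd).resolve_left
      fun h => apply_notMem_revealedSet φ hlt (h ▸ hc)
  exact false_of_three_distinct_mem_pair hwa.ne hwb.ne hab.ne
    (hold _ (apply_mem_revealedSet φ i) a ha hwa) (hold a ha b hb hab)
    (hold b hb _ (apply_mem_revealedSet φ i) hwb.symm)

end Cautious

section Gnk

variable {n k : ℕ}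

abbrev hub (u : Bool) : (Bool ⊕ Fin n) ⊕ Fin k := .inl (.inl u)

abbrev leaf (j : Fin n) : (Bool ⊕ Fin n) ⊕ Fin k := .inl (.inr j)

@[simp] lemma gnkGraph_adj_hub_hub {u v : Bool} :
    (gnkGraph n k).Adj (hub u) (hub v) ↔ u ≠ v := by
  cases u <;> cases v <;> simp [gnkGraph]

@[simp] lemma gnkGraph_adj_hub_leaf {u : Bool} {j : Fin n} :
    (gnkGraph n k).Adj (hub u) (leaf j) := by
  simp [gnkGraph]

@[simp] lemma gnkGraph_adj_leaf_hub {u : Bool} {j : Fin n} :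
    (gnkGraph n k).Adj (leaf j) (hub u) := by
  simp [gnkGraph]

@[simp] lemma gnkGraph_not_adj_leaf_leaf {i j : Fin n} :
    ¬ (gnkGraph n k).Adj (leaf i) (leaf j) := by
  simp [gnkGraph]

@[simp] lemma gnkGraph_not_adj_inr_left {v : (Bool ⊕ Fin n) ⊕ Fin k} {l : Fin k} :
    ¬ (gnkGraph n k).Adj (.inr l) v := by
  simp [gnkGraph]

@[simp] lemma gnkGraph_not_adj_inr_right {v : (Bool ⊕ Fin n) ⊕ Fin k} {l : Fin k} :
    ¬ (gnkGraph n k).Adj v (.inr l) := by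
  simp [gnkGraph]

def ContainsTriangle (S : Set ((Bool ⊕ Fin n) ⊕ Fin k)) : Prop :=
  (∀ u, hub u ∈ S) ∧ ∃ j, leaf j ∈ S

lemma isAcyclic_induce_gnkGraph_iff (S : Set ((Bool ⊕ Fin n) ⊕ Fin k)) :
    ((gnkGraph n k).induce S).IsAcyclic ↔ ¬ ContainsTriangle S := by
  constructor
  · rintro hS ⟨hhub, j, hj⟩
    exact not_isAcyclic_of_adj_of_adj_of_adj (a := ⟨hub true, hhub true⟩)
      (b := ⟨hub false, hhub false⟩) (c := ⟨leaf j, hj⟩) (by simp) (by simp) (by simp) hS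
  · intro hS
    by_cases hhub : ∀ u, hub u ∈ S
    · refine isAcyclic_induce_of_forall_adj (hub true) ?_
      have hleaf : ∀ j, leaf j ∉ S := fun j hj => hS ⟨hhub, j, hj⟩
      rintro (((_ | _) | _) | _) ha (((_ | _) | _) | _) hb hab <;> simp_all
    · push Not at hhub
      obtain ⟨u, hu⟩ := hhub
      refine isAcyclic_induce_of_forall_adj (hub !u) ?_
      rintro (((_ | _) | _) | _) ha (((_ | _) | _) | _) hb hab <;> cases u <;> simp_all

end Gnk

lemma add_two_le_card_of_inl_mem {α β : Type} [Fintype β] [DecidableEq α] [DecidableEq β]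
    {s : Finset (α ⊕ β)} (hs : ∀ b, .inr b ∈ s) {a a' : α} (ha : .inl a ∈ s)
    (ha' : .inl a' ∈ s) (hne : a ≠ a') : Fintype.card β + 2 ≤ s.card := by
  calc Fintype.card β + 2 = (insert (.inl a) (insert (.inl a') (Finset.univ.map
        Embedding.inr)) : Finset (α ⊕ β)).card := by
          rw [Finset.card_insert_of_notMem (by simpa using hne),
            Finset.card_insert_of_notMem (by simp), Finset.card_map, Finset.card_univ]
    _ ≤ s.card := Finset.card_le_card (by
          intro v hv
          simp only [Finset.mem_insert, Finset.mem_map, Finset.mem_univ, true_and] at hv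
          rcases hv with rfl | rfl | ⟨b, rfl⟩
          exacts [ha, ha', hs b])

section GreedyOnGnk

variable {n k : ℕ} (φ : Fin (Fintype.card ((Bool ⊕ Fin n) ⊕ Fin k)) ≃ ((Bool ⊕ Fin n) ⊕ Fin k))

lemma accepts_gfAlg_gnkGraph_iff (i : Fin (Fintype.card ((Bool ⊕ Fin n) ⊕ Fin k))) :
    accepts gfAlg (gnkGraph n k) φ i = true ↔
      ¬ ContainsTriangle (candidateSet gfAlg (gnkGraph n k) φ i) :=
  (accepts_gfAlg_iff _ φ i).trans (isAcyclic_induce_gnkGraph_iff _)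

lemma gfAlg_accepts_inr (l : Fin k) :
    accepts gfAlg (gnkGraph n k) φ (φ.symm (.inr l)) = true := by
  rw [accepts_gfAlg_gnkGraph_iff, candidateSet, φ.apply_symm_apply]
  have := isAcyclic_induce_acceptedBefore (G := gnkGraph n k)
    (fun i => (accepts_gfAlg_iff _ φ i).mp) (φ.symm (.inr l)).val
  rw [isAcyclic_induce_gnkGraph_iff] at this
  simpa [ContainsTriangle] using this

lemma add_two_le_card_acceptedSet_gfAlg : k + 2 ≤ (acceptedSet gfAlg (gnkGraph n k) φ).card := by
  have hinr : ∀ l, .inr l ∈ acceptedSet gfAlg (gnkGraph n k) φ := fun l =>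
    mem_acceptedSet.mpr (gfAlg_accepts_inr φ l)
  by_cases hhub : ∀ u, hub u ∈ acceptedSet gfAlg (gnkGraph n k) φ
  · simpa using add_two_le_card_of_inl_mem hinr (hhub true) (hhub false) (by simp)
  · push Not at hhub
    obtain ⟨u, hu⟩ := hhub
    obtain ⟨hhubs, j, hj⟩ :
        ContainsTriangle (candidateSet gfAlg (gnkGraph n k) φ (φ.symm (hub u))) := by
      simpa [mem_acceptedSet, accepts_gfAlg_gnkGraph_iff] using hu
    have hacc : ∀ v ∈ candidateSet gfAlg (gnkGraph n k) φ (φ.symm (hub u)), v ≠ hub u →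
        v ∈ acceptedSet gfAlg (gnkGraph n k) φ := fun v hv hne =>
      mem_acceptedSet_of_mem_candidateSet hv (by simpa using hne)
    simpa using add_two_le_card_of_inl_mem hinr (hacc _ (hhubs !u) (by simp))
      (hacc _ hj (by simp)) (by simp)

end GreedyOnGnk

section GreedyWorstOrder

variable (n k : ℕ)

/-- Reveals the two hubs first, then the leaves, then the isolated vertices. -/
def hubsFirstOrder : Fin (Fintype.card ((Bool ⊕ Fin n) ⊕ Fin k)) ≃ ((Bool ⊕ Fin n) ⊕ Fin k) :=
  (finCongr (by simp [add_comm])).trans <| finSumFinEquiv.symm.trans <|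
    Equiv.sumCongr (finSumFinEquiv.symm.trans (Equiv.sumCongr finTwoEquiv (Equiv.refl _)))
      (Equiv.refl _)

lemma hubsFirstOrder_symm_hub_lt_leaf (u : Bool) (j : Fin n) :
    (hubsFirstOrder n k).symm (hub u) < (hubsFirstOrder n k).symm (leaf j) := by
  simpa [hubsFirstOrder, Fin.lt_def] using Nat.lt_add_right _ (finTwoEquiv.symm u).isLt

lemma gfAlg_hubsFirstOrder_accepts_hub (u : Bool) :
    accepts gfAlg (gnkGraph n k) (hubsFirstOrder n k) ((hubsFirstOrder n k).symm (hub u)) =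
      true := by
  rw [accepts_gfAlg_gnkGraph_iff]
  rintro ⟨-, j, hj | ⟨hlt, -⟩⟩
  · simp at hj
  · exact absurd hlt (not_lt.mpr (hubsFirstOrder_symm_hub_lt_leaf n k u j).le)

lemma gfAlg_hubsFirstOrder_rejects_leaf (j : Fin n) :
    accepts gfAlg (gnkGraph n k) (hubsFirstOrder n k) ((hubsFirstOrder n k).symm (leaf j)) =
      false := by
  rw [← Bool.not_eq_true, accepts_gfAlg_gnkGraph_iff, not_not]
  refine ⟨fun u => Or.inr ⟨hubsFirstOrder_symm_hub_lt_leaf n k u j, ?_⟩, j, ?_⟩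
  · simpa using gfAlg_hubsFirstOrder_accepts_hub n k u
  · simp [candidateSet]

lemma card_acceptedSet_gfAlg_hubsFirstOrder :
    (acceptedSet gfAlg (gnkGraph n k) (hubsFirstOrder n k)).card ≤ k + 2 := by
  calc (acceptedSet gfAlg (gnkGraph n k) (hubsFirstOrder n k)).card
      ≤ (insert (hub true) (insert (hub false) (Finset.univ.map Embedding.inr)) :
          Finset ((Bool ⊕ Fin n) ⊕ Fin k)).card := by
        refine Finset.card_le_card fun v hv => ?_
        rcases v with ((_ | _) | j) | l
        · simp
        · simp
        · simp [mem_acceptedSet, gfAlg_hubsFirstOrder_rejects_leaf] at hv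
        · simp
    _ ≤ k + 2 := by
        refine (Finset.card_insert_le _ _).trans (Nat.succ_le_succ ?_)
        refine (Finset.card_insert_le _ _).trans ?_
        simp

end GreedyWorstOrder

lemma minScore_gfAlg_gnkGraph (n k : ℕ) : minScore gfAlg (gnkGraph n k) = k + 2 := by
  have hworst := le_antisymm (card_acceptedSet_gfAlg_hubsFirstOrder n k)
    (add_two_le_card_acceptedSet_gfAlg (hubsFirstOrder n k))
  refine le_antisymm (Nat.sInf_le ⟨_, hworst⟩) (le_csInf ⟨_, _, hworst⟩ ?_)
  rintro m ⟨φ, rfl⟩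
  exact add_two_le_card_acceptedSet_gfAlg φ

section CautiousOnGnk

variable {n k : ℕ} (φ : Fin (Fintype.card ((Bool ⊕ Fin n) ⊕ Fin k)) ≃ ((Bool ⊕ Fin n) ⊕ Fin k))

local notation "R" => revealedSet φ
local notation "C" => candidateSet cautiousGfAlg (gnkGraph n k) φ
local notation "Acc" => acceptedSet cautiousGfAlg (gnkGraph n k) φ

lemma cautiousGfAlg_rejects_gnkGraph {i : Fin (Fintype.card ((Bool ⊕ Fin n) ⊕ Fin k))}
    (h : accepts cautiousGfAlg (gnkGraph n k) φ i ≠ true) :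
    CompletesFirstEdge (gnkGraph n k) (R i) (φ i) ∨
      CompletesLoneTriangle (gnkGraph n k) (R i) (φ i) ∨ ContainsTriangle (C i) := by
  rw [Ne, accepts_cautiousGfAlg_iff, isAcyclic_induce_gnkGraph_iff] at h
  tauto

lemma completesFirstEdge_of_leaf_rejected {u : Bool} {j : Fin n}
    (hlt : φ.symm (leaf j) < φ.symm (hub u))
    (hj : accepts cautiousGfAlg (gnkGraph n k) φ (φ.symm (leaf j)) ≠ true) :
    CompletesFirstEdge (gnkGraph n k) (R (φ.symm (leaf j))) (φ (φ.symm (leaf j))) := by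
  have hu : hub u ∉ R (φ.symm (leaf j)) := by
    simpa using apply_notMem_revealedSet φ hlt
  rcases cautiousGfAlg_rejects_gnkGraph φ hj with h | ⟨a, ha, b, hb, hja, hjb, hab, -⟩ | ⟨hhub, -⟩
  · exact h
  · rw [φ.apply_symm_apply] at hja hjb
    rcases a with ((_ | _) | _) | _ <;> rcases b with ((_ | _) | _) | _ <;> cases u <;>
      simp_all
  · exact absurd (candidateSet_subset_revealedSet _ _ φ _ (hhub u)) hu

lemma cautiousGfAlg_not_accepts_both_hubs_of_lt {u : Bool}
    (hlt : φ.symm (hub u) < φ.symm (hub !u)) (hA : hub u ∈ Acc) (hB : hub (!u) ∈ Acc) : False := by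
  set iB := φ.symm (hub !u)
  have hφ : φ iB = hub !u := φ.apply_symm_apply _
  obtain ⟨hfirst, hlone, hcycle⟩ := (accepts_cautiousGfAlg_iff _ φ iB).mp (mem_acceptedSet.mp hB)
  rw [isAcyclic_induce_gnkGraph_iff] at hcycle
  rw [hφ] at hfirst hlone
  have hAR : hub u ∈ R iB := hlt.le
  have hleaf_lt : ∀ j, leaf j ∈ R iB → φ.symm (leaf j) < iB := fun j hj =>
    lt_of_le_of_ne hj fun h => by simpa using φ.symm.injective h
  have hrej : ∀ j, leaf j ∈ R iB →
      accepts cautiousGfAlg (gnkGraph n k) φ (φ.symm (leaf j)) ≠ true := by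
    intro j hj hacc
    refine hcycle ⟨fun v => ?_, j, Or.inr ⟨hleaf_lt j hj, hacc⟩⟩
    by_cases hv : v = u
    · subst hv
      exact Or.inr ⟨hlt, mem_acceptedSet.mp hA⟩
    · exact Or.inl (by rw [hφ, Bool.eq_not_iff.mpr hv])
  have hone : ∀ j j', leaf j ∈ R iB → leaf j' ∈ R iB → j = j' := fun j j' hj hj' => by
    simpa using φ.symm.injective (completesFirstEdge_revealedSet_unique _ φ
      (completesFirstEdge_of_leaf_rejected φ (hleaf_lt j hj) (hrej j hj))
      (completesFirstEdge_of_leaf_rejected φ (hleaf_lt j' hj') (hrej j' hj')))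
  by_cases hleaf : ∃ j, leaf j ∈ R iB
  · obtain ⟨j, hj⟩ := hleaf
    refine hlone ⟨hub u, hAR, leaf j, hj, by simp, by simp, by simp, ?_⟩
    rintro (((_ | _) | j') | l) hc d hd hcd
    · cases u <;> simp
    · cases u <;> simp
    · exact Or.inr (Or.inr (by rw [hone j' j hc hj]))
    · simp at hcd
  · push Not at hleaf
    refine hfirst ⟨⟨hub u, hAR, by simp⟩, ?_⟩
    rintro (((_ | _) | j) | l) hc (((_ | _) | j') | l') hd hcd <;> cases u <;> simp_all

lemma cautiousGfAlg_not_accepts_both_hubs : ¬ ∀ u, hub u ∈ Acc := by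
  intro h
  have hne : φ.symm (hub true) ≠ φ.symm (hub false) := by simp
  rcases hne.lt_or_gt with hlt | hlt
  · exact cautiousGfAlg_not_accepts_both_hubs_of_lt φ hlt (h _) (h _)
  · exact cautiousGfAlg_not_accepts_both_hubs_of_lt φ hlt (h _) (h _)

lemma containsTriangle_candidateSet_unique {i i' : Fin (Fintype.card ((Bool ⊕ Fin n) ⊕ Fin k))}
    (hi : ContainsTriangle (C i)) (hi' : ContainsTriangle (C i')) : i = i' := by
  by_contra hne
  refine cautiousGfAlg_not_accepts_both_hubs φ fun u => ?_
  by_cases hu : hub u = φ i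
  · exact mem_acceptedSet_of_mem_candidateSet (hi'.1 u) (hu.trans_ne (φ.injective.ne hne))
  · exact mem_acceptedSet_of_mem_candidateSet (hi.1 u) hu

lemma card_rejected_cautiousGfAlg_le :
    (Finset.univ.filter fun i => ¬ accepts cautiousGfAlg (gnkGraph n k) φ i = true).card ≤ 3 := by
  classical
  have hsub : (Finset.univ.filter fun i => ¬ accepts cautiousGfAlg (gnkGraph n k) φ i = true) ⊆
      Finset.univ.filter (fun i => CompletesFirstEdge (gnkGraph n k) (R i) (φ i)) ∪
      Finset.univ.filter (fun i => CompletesLoneTriangle (gnkGraph n k) (R i) (φ i)) ∪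
      Finset.univ.filter (fun i => ContainsTriangle (C i)) := by
    intro i hi
    simp only [Finset.mem_filter, Finset.mem_univ, true_and, Finset.mem_union] at hi ⊢
    rcases cautiousGfAlg_rejects_gnkGraph φ hi with h | h | h <;> simp [h]
  have hone : ∀ {p : Fin (Fintype.card ((Bool ⊕ Fin n) ⊕ Fin k)) → Prop} [DecidablePred p],
      (∀ {i i'}, p i → p i' → i = i') → (Finset.univ.filter p).card ≤ 1 :=
    fun h => Finset.card_le_one.mpr fun a ha b hb =>
      h (Finset.mem_filter.mp ha).2 (Finset.mem_filter.mp hb).2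
  calc _ ≤ _ := Finset.card_le_card hsub
    _ ≤ 1 + 1 + 1 := (Finset.card_union_le _ _).trans (add_le_add
        ((Finset.card_union_le _ _).trans (add_le_add
          (hone (completesFirstEdge_revealedSet_unique _ φ))
          (hone (completesLoneTriangle_revealedSet_unique _ φ))))
        (hone (containsTriangle_candidateSet_unique φ)))

lemma card_acceptedSet_cautiousGfAlg_gnkGraph : k + n - 1 ≤ (Acc).card := by
  have hsum := card_acceptedSet_add_card_rejected cautiousGfAlg (gnkGraph n k) φ
  have hrej := card_rejected_cautiousGfAlg_le φ
  simp only [Fintype.card_sum, Fintype.card_bool, Fintype.card_fin] at hsum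
  omega

end CautiousOnGnk

/-- for `n ≥ 4` and any `k ≥ 0`, on the graph `G_{n,k}` the greedy algorithm
for Online Maximal Forest always produces a forest and satisfies `GF(G_{n,k}) = k + 2`,
while some online algorithm always produces a forest of size at least `k + n - 1`;
in particular the greedy algorithm is not online optimal on `G_{n,k}`. -/
theorem statement16 (n k : ℕ) (hn : 4 ≤ n) :
    (∀ φ : Fin (Fintype.card ((Bool ⊕ Fin n) ⊕ Fin k)) ≃ ((Bool ⊕ Fin n) ⊕ Fin k),
        IsForestSet (gnkGraph n k) (acceptedSet gfAlg (gnkGraph n k) φ)) ∧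
      minScore gfAlg (gnkGraph n k) = k + 2 ∧
      (∃ A : OnlineAlg,
        ∀ φ : Fin (Fintype.card ((Bool ⊕ Fin n) ⊕ Fin k)) ≃ ((Bool ⊕ Fin n) ⊕ Fin k),
          IsForestSet (gnkGraph n k) (acceptedSet A (gnkGraph n k) φ) ∧
            k + n - 1 ≤ (acceptedSet A (gnkGraph n k) φ).card) ∧
      minScore gfAlg (gnkGraph n k) < k + n - 1 := by
  refine ⟨isForestSet_acceptedSet_gfAlg _, minScore_gfAlg_gnkGraph n k,
    ⟨cautiousGfAlg, fun φ => ⟨isForestSet_acceptedSet_cautiousGfAlg _ φ,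
      card_acceptedSet_cautiousGfAlg_gnkGraph φ⟩⟩, ?_⟩
  rw [minScore_gfAlg_gnkGraph]
  omega

end OnlinePaper
end
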